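/- arXiv:1708.04470 — 3 statements merged into one kernel-verified Lean document; each statement's English description precedes it below -/
import Mathlib

section
/- Let Z_n := S_n − G_n where S_n is a random walk with i.i.d. increments and G_n its centre of mass. Then Z_{n+1} = (n/(n+1))·∑_{i=1}^n (i/n)·X_{i+1}, and consequently Z_{n+1} has the same distribution as (n/(n+1))·G_n. -/
/-!
Summing the partial sums by parts gives `∑_{i ≤ N} S_i = ∑_{j ≤ N} (N + 1 - j) X_j`. Hence both
`Z_{n+1}` and `(n/(n+1)) G_n` are the combination `∑_{i=1}^n (i/(n+1)) Y_i`, with `Y_i = X_{i+1}`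
for the first and `Y_i = X_{n+1-i}` for the second. Both index maps are injective, so in each case
`(Y_1, …, Y_n)` has the product law of `n` copies of the law of `X_1`, and the two combinations are
identically distributed.
-/

open MeasureTheory ProbabilityTheory Finset

section
variable {M : Type*} [AddCommMonoid M]

def partialSum (x : ℕ → M) (n : ℕ) : M := ∑ i ∈ Icc 1 n, x i

theorem sum_partialSum (x : ℕ → M) (N : ℕ) :
    ∑ i ∈ Icc 1 N, partialSum x i = ∑ j ∈ Icc 1 N, (N + 1 - j) • x j := by
  unfold partialSum
  rw [sum_comm' (t' := Icc 1 N) (s' := fun j => Icc j N) (by intro i j; simp only [mem_Icc]; omega)]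
  refine sum_congr rfl fun j _ => ?_
  rw [sum_const, Nat.card_Icc]

theorem sum_Icc_one_succ (f : ℕ → M) (n : ℕ) :
    ∑ j ∈ Icc 1 (n + 1), f j = f 1 + ∑ i ∈ Icc 1 n, f (i + 1) := by
  rw [← insert_Icc_add_one_left_eq_Icc (by omega), sum_insert (by simp), ← map_add_right_Icc,
    sum_map]
  rfl

end

section
variable {E : Type*} [AddCommGroup E] [Module ℝ E]

noncomputable def centerOfMass (x : ℕ → E) (n : ℕ) : E :=
  (n : ℝ)⁻¹ • ∑ i ∈ Icc 1 n, partialSum x i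

theorem partialSum_sub_centerOfMass (x : ℕ → E) (N : ℕ) :
    partialSum x N - centerOfMass x N = ∑ j ∈ Icc 1 N, (((j : ℝ) - 1) / N) • x j := by
  rw [centerOfMass, sum_partialSum, partialSum, smul_sum, ← sum_sub_distrib]
  refine sum_congr rfl fun j hj => ?_
  obtain ⟨hj1, hjN⟩ := mem_Icc.mp hj
  have hcoef : ((j : ℝ) - 1) / N = 1 - (N : ℝ)⁻¹ * ((N + 1 - j : ℕ) : ℝ) := by
    have hN : (N : ℝ) ≠ 0 := by norm_cast; omega
    rw [Nat.cast_sub (by omega)]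
    push_cast
    field_simp
    ring
  rw [hcoef, sub_smul, one_smul, ← Nat.cast_smul_eq_nsmul ℝ, smul_smul]

theorem partialSum_sub_centerOfMass_succ (x : ℕ → E) (n : ℕ) :
    partialSum x (n + 1) - centerOfMass x (n + 1)
      = ∑ i ∈ Icc 1 n, ((i : ℝ) / (n + 1)) • x (i + 1) := by
  rw [partialSum_sub_centerOfMass, sum_Icc_one_succ]
  push_cast
  simp

theorem smul_centerOfMass (x : ℕ → E) (n : ℕ) :
    ((n : ℝ) / (n + 1)) • centerOfMass x n
      = ∑ i ∈ Icc 1 n, ((i : ℝ) / (n + 1)) • x (n + 1 - i) := by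
  rw [centerOfMass, sum_partialSum, smul_smul, smul_sum]
  have reflect_mem : ∀ j ∈ Icc 1 n, n + 1 - j ∈ Icc 1 n := by intro j; simp only [mem_Icc]; omega
  have reflect_reflect : ∀ j ∈ Icc 1 n, n + 1 - (n + 1 - j) = j := by
    intro j; simp only [mem_Icc]; omega
  refine sum_nbij' (n + 1 - ·) (n + 1 - ·) reflect_mem reflect_mem reflect_reflect reflect_reflect
    fun j hj => ?_
  obtain ⟨hj1, hjn⟩ := mem_Icc.mp hj
  have hn : (n : ℝ) ≠ 0 := by norm_cast; omega
  rw [← Nat.cast_smul_eq_nsmul ℝ, smul_smul, reflect_reflect j hj, Nat.cast_sub (by omega)]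
  congr 1
  push_cast
  field_simp

end

namespace ProbabilityTheory

variable {Ω ι κ E : Type*} [MeasurableSpace Ω] {μ : Measure Ω} [MeasurableSpace E]
  {X : κ → Ω → E} {k₀ : κ}

theorem iIndepFun.map_comp_eq_pi [Fintype ι] (hindep : iIndepFun X μ)
    (hident : ∀ k, IdentDistrib (X k) (X k₀) μ μ) {σ : ι → κ} (hσ : σ.Injective) :
    μ.map (fun ω i => X (σ i) ω) = Measure.pi fun _ => μ.map (X k₀) := by
  rw [(hindep.precomp hσ).map_fun_eq_pi_map fun i => (hident _).aemeasurable_fst]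
  simp_rw [(hident _).map_eq]

theorem iIndepFun.identDistrib_comp [Fintype ι] (hindep : iIndepFun X μ)
    (hident : ∀ k, IdentDistrib (X k) (X k₀) μ μ) {σ τ : ι → κ} (hσ : σ.Injective)
    (hτ : τ.Injective) :
    IdentDistrib (fun ω i => X (σ i) ω) (fun ω i => X (τ i) ω) μ μ where
  aemeasurable_fst := aemeasurable_pi_lambda _ fun _ => (hident _).aemeasurable_fst
  aemeasurable_snd := aemeasurable_pi_lambda _ fun _ => (hident _).aemeasurable_fst
  map_eq := by rw [hindep.map_comp_eq_pi hident hσ, hindep.map_comp_eq_pi hident hτ]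

theorem iIndepFun.identDistrib_sum_smul [AddCommMonoid E] [Module ℝ E] [MeasurableAdd₂ E]
    [MeasurableConstSMul ℝ E] (hindep : iIndepFun X μ)
    (hident : ∀ k, IdentDistrib (X k) (X k₀) μ μ) (s : Finset ι) (c : ι → ℝ) {σ τ : ι → κ}
    (hσ : Set.InjOn σ s) (hτ : Set.InjOn τ s) :
    IdentDistrib (fun ω => ∑ i ∈ s, c i • X (σ i) ω) (fun ω => ∑ i ∈ s, c i • X (τ i) ω) μ μ := by
  have hcomb : Measurable fun v : s → E => ∑ i : s, c i • v i :=
    Finset.measurable_sum _ fun i _ => (measurable_pi_apply i).const_smul (c i)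
  simp_rw [← sum_coe_sort s]
  exact (hindep.identDistrib_comp hident hσ.injective hτ.injective).comp hcomb

end ProbabilityTheory

theorem Z_representation_and_identDistrib_general {Ω : Type*} [MeasureSpace Ω] {d : ℕ}
    (X : ℕ → Ω → EuclideanSpace ℝ (Fin d))
    (hindep : iIndepFun X ℙ)
    (hident : ∀ i, IdentDistrib (X i) (X 1) ℙ ℙ)
    (S G Z : ℕ → Ω → EuclideanSpace ℝ (Fin d))
    (hS : ∀ n ω, S n ω = ∑ i ∈ Finset.Icc 1 n, X i ω)
    (hG : ∀ n ω, G n ω = ((n : ℝ))⁻¹ • ∑ i ∈ Finset.Icc 1 n, S i ω)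
    (hZ : ∀ n ω, Z n ω = S n ω - G n ω)
    (n : ℕ) :
    (∀ ω, Z (n + 1) ω
        = ((n : ℝ) / (n + 1)) • ∑ i ∈ Finset.Icc 1 n, ((i : ℝ) / n) • X (i + 1) ω)
    ∧ IdentDistrib (Z (n + 1)) (fun ω => ((n : ℝ) / (n + 1)) • G n ω) ℙ ℙ := by
  have hS_eq : ∀ m ω, S m ω = partialSum (X · ω) m := hS
  have hG_eq : ∀ m ω, G m ω = centerOfMass (X · ω) m := fun m ω => by
    simp only [hG, hS_eq, centerOfMass]
  have hZ_eq : Z (n + 1) = fun ω => ∑ i ∈ Icc 1 n, ((i : ℝ) / (n + 1)) • X (i + 1) ω := by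
    ext1 ω
    rw [hZ, hS_eq, hG_eq, partialSum_sub_centerOfMass_succ]
  have hscaledG_eq : (fun ω => ((n : ℝ) / (n + 1)) • G n ω)
      = fun ω => ∑ i ∈ Icc 1 n, ((i : ℝ) / (n + 1)) • X (n + 1 - i) ω := by
    ext1 ω
    rw [hG_eq, smul_centerOfMass]
  refine ⟨fun ω => ?_, ?_⟩
  · rw [hZ_eq, smul_sum]
    refine sum_congr rfl fun i hi => ?_
    have hn : (n : ℝ) ≠ 0 := by have := mem_Icc.mp hi; norm_cast; omega
    rw [smul_smul, div_mul_div_comm, mul_comm (n : ℝ), mul_div_mul_right _ _ hn]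
  · rw [hZ_eq, hscaledG_eq]
    exact hindep.identDistrib_sum_smul hident _ _ (add_left_injective 1).injOn
      fun i hi j hj h => by simp only [coe_Icc, Set.mem_Icc] at hi hj; omega

/-- With `Z n = S n − G n`, one has `Z (n+1) = (n/(n+1)) • ∑_{i=1}^n (i/n) • X_{i+1}`,
and consequently `Z (n+1)` has the same distribution as `(n/(n+1)) • G n`. -/
theorem Z_representation_and_identDistrib {Ω : Type*} [MeasureSpace Ω]
    [IsProbabilityMeasure (ℙ : Measure Ω)] {d : ℕ}
    (X : ℕ → Ω → EuclideanSpace ℝ (Fin d))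
    (hmeas : ∀ i, Measurable (X i))
    (hindep : iIndepFun X ℙ)
    (hident : ∀ i, IdentDistrib (X i) (X 1) ℙ ℙ)
    (S G Z : ℕ → Ω → EuclideanSpace ℝ (Fin d))
    (hS : ∀ n ω, S n ω = ∑ i ∈ Finset.Icc 1 n, X i ω)
    (hG : ∀ n ω, G n ω = ((n : ℝ))⁻¹ • ∑ i ∈ Finset.Icc 1 n, S i ω)
    (hZ : ∀ n ω, Z n ω = S n ω - G n ω)
    (n : ℕ) (hn : 1 ≤ n) :
    (∀ ω, Z (n + 1) ω
        = ((n : ℝ) / (n + 1)) • ∑ i ∈ Finset.Icc 1 n, ((i : ℝ) / n) • X (i + 1) ω)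
    ∧ IdentDistrib (Z (n + 1)) (fun ω => ((n : ℝ) / (n + 1)) • G n ω) ℙ ℙ :=
  Z_representation_and_identDistrib_general X hindep hident S G Z hS hG hZ n
end

section
/- Let X be a non-degenerate lattice random vector in ℝ^d (supported on an affinely independent set of d+1 points with positive probability). Then the set K = {|det H| : P(X ∈ b + Hℤ^d) = 1 for some b} is a bounded subset of (0,∞) with infimum 0. -/
open MeasureTheory ProbabilityTheory Matrix

/-- For a non-degenerate lattice random vector `X` in `ℝ^d`, the set
`K = {|det H| : P(X ∈ b + Hℤ^d) = 1 for some b}` is a bounded subset of `(0, ∞)`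
with infimum `0`. -/
theorem lattice_det_set_bounded_inf_zero {Ω : Type*} [MeasureSpace Ω]
    [IsProbabilityMeasure (ℙ : Measure Ω)] {d : ℕ} (hd : 1 ≤ d)
    (X : Ω → (Fin d → ℝ)) (hmeas : Measurable X)
    -- X has a lattice distribution:
    (hlat : ∃ (H : Matrix (Fin d) (Fin d) ℝ) (b : Fin d → ℝ),
      ∀ᵐ ω ∂ℙ, ∃ z : Fin d → ℤ, X ω = b + H.mulVec (fun i => (z i : ℝ)))
    -- non-degeneracy: the support contains d+1 affinely independent atoms:
    (hnd : ∃ x : Fin (d + 1) → (Fin d → ℝ),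
      AffineIndependent ℝ x ∧ ∀ i, 0 < ℙ {ω | X ω = x i})
    (K : Set ℝ)
    (hK : K = {h : ℝ | ∃ (H : Matrix (Fin d) (Fin d) ℝ) (b : Fin d → ℝ),
      |H.det| = h ∧ ∀ᵐ ω ∂ℙ, ∃ z : Fin d → ℤ, X ω = b + H.mulVec (fun i => (z i : ℝ))}) :
    K ⊆ Set.Ioi (0 : ℝ) ∧ BddAbove K ∧ IsGLB K 0 := by
  obtain ⟨x, hxaff, hxpos⟩ := hnd
  set Λ : Matrix (Fin d) (Fin d) ℝ := Matrix.of (fun j i => x j.succ i - x 0 i) with hΛdef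
  have hli : LinearIndependent ℝ (fun j : Fin d => Λ j) := by
    have h1 := (affineIndependent_iff_linearIndependent_vsub ℝ x 0).mp hxaff
    have hinj : Function.Injective
        (fun j : Fin d => (⟨j.succ, Fin.succ_ne_zero j⟩ : {i : Fin (d+1) // i ≠ 0})) := by
      intro a b hab
      have := congrArg Subtype.val hab
      simpa [Fin.succ_inj] using this
    have h2 := h1.comp _ hinj
    have heq : (fun j : Fin d => Λ j) =
        ((fun i : {i : Fin (d+1) // i ≠ 0} => x i -ᵥ x 0) ∘
          fun j : Fin d => (⟨j.succ, Fin.succ_ne_zero j⟩ : {i : Fin (d+1) // i ≠ 0})) := by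
      funext j
      ext i
      simp [hΛdef, vsub_eq_sub]
    rw [heq]
    exact h2
  have hΛunit : IsUnit Λ := linearIndependent_rows_iff_isUnit.mp hli
  have hΛdet : Λ.det ≠ 0 := (Matrix.isUnit_iff_isUnit_det Λ |>.mp hΛunit).ne_zero
  have key : ∀ (H : Matrix (Fin d) (Fin d) ℝ) (b : Fin d → ℝ),
      (∀ᵐ ω ∂ℙ, ∃ z : Fin d → ℤ, X ω = b + H.mulVec (fun i => (z i : ℝ))) →
      ∀ i : Fin (d+1), ∃ z : Fin d → ℤ, x i = b + H.mulVec (fun k => (z k : ℝ)) := by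
    intro H b hae i
    have hfreq : ∃ᶠ ω in ae ℙ, X ω = x i :=
      frequently_ae_mem_iff.mpr (hxpos i).ne'
    obtain ⟨ω, hω1, hω2⟩ := (hfreq.and_eventually hae).exists
    obtain ⟨z, hz⟩ := hω2
    exact ⟨z, hω1.symm.trans hz⟩
  have bound : ∀ (H : Matrix (Fin d) (Fin d) ℝ) (b : Fin d → ℝ),
      (∀ᵐ ω ∂ℙ, ∃ z : Fin d → ℤ, X ω = b + H.mulVec (fun i => (z i : ℝ))) →
      H.det ≠ 0 ∧ |H.det| ≤ |Λ.det| := by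
    intro H b hae
    choose z hz using key H b hae
    set W : Matrix (Fin d) (Fin d) ℤ := Matrix.of (fun j k => z j.succ k - z 0 k) with hWdef
    have hfact : Λ = (W.map (Int.cast : ℤ → ℝ)) * Hᵀ := by
      ext j i
      have h1 := congrFun (hz j.succ) i
      have h2 := congrFun (hz 0) i
      simp only [Pi.add_apply] at h1 h2
      simp only [hΛdef, hWdef, Matrix.of_apply, Matrix.mul_apply, Matrix.map_apply,
        Matrix.transpose_apply, h1, h2, Matrix.mulVec, dotProduct]
      have hterm : ∀ k, ((z j.succ k - z 0 k : ℤ) : ℝ) * H i k =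
          H i k * (z j.succ k : ℝ) - H i k * (z 0 k : ℝ) := by
        intro k; push_cast; ring
      simp only [hterm, Finset.sum_sub_distrib]
      ring
    have hmapdet : (W.map (Int.cast : ℤ → ℝ)).det = ((W.det : ℝ)) := by
      exact (RingHom.map_det (Int.castRingHom ℝ) W).symm
    have hdetfact : Λ.det = ((W.det : ℝ)) * H.det := by
      rw [hfact, Matrix.det_mul, Matrix.det_transpose, hmapdet]
    have hWne : (W.det : ℝ) ≠ 0 := fun h0 => hΛdet (by rw [hdetfact, h0, zero_mul])
    have hHne : H.det ≠ 0 := fun h0 => hΛdet (by rw [hdetfact, h0, mul_zero])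
    refine ⟨hHne, ?_⟩
    have hWint : (1 : ℝ) ≤ |(W.det : ℝ)| := by
      have h0 : W.det ≠ 0 := by exact_mod_cast hWne
      have h1 := Int.one_le_abs h0
      calc (1:ℝ) = ((1:ℤ):ℝ) := by norm_num
        _ ≤ ((|W.det| : ℤ) : ℝ) := by exact_mod_cast h1
        _ = |(W.det : ℝ)| := by push_cast; ring
    calc |H.det| = 1 * |H.det| := (one_mul _).symm
      _ ≤ |(W.det : ℝ)| * |H.det| := mul_le_mul_of_nonneg_right hWint (abs_nonneg _)
      _ = |Λ.det| := by rw [hdetfact, abs_mul]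
  have part1 : K ⊆ Set.Ioi (0 : ℝ) := by
    rw [hK]
    rintro h ⟨H, b, rfl, hae⟩
    exact abs_pos.mpr (bound H b hae).1
  refine ⟨part1, ⟨|Λ.det|, ?_⟩, ?_⟩
  · rw [hK]
    rintro h ⟨H, b, rfl, hae⟩
    exact (bound H b hae).2
  · constructor
    · intro h hh
      exact (part1 hh).le
    · intro c hc
      by_contra hcpos
      push_neg at hcpos
      obtain ⟨H₀, b₀, hae₀⟩ := hlat
      have hmem₀ : |H₀.det| ∈ K := by rw [hK]; exact ⟨H₀, b₀, rfl, hae₀⟩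
      have h₀pos : 0 < |H₀.det| := part1 hmem₀
      set h₀ := |H₀.det| with hh₀
      have hscale : ∀ n : ℕ, ((1/2 : ℝ)^n)^d * h₀ ∈ K := by
        intro n
        rw [hK]
        refine ⟨((1/2 : ℝ)^n) • H₀, b₀, ?_, ?_⟩
        · rw [Matrix.det_smul, abs_mul, abs_pow, abs_pow, Fintype.card_fin,
            abs_of_pos (by norm_num : (0:ℝ) < 1/2)]
        · filter_upwards [hae₀] with ω hω
          obtain ⟨z, hz⟩ := hω
          refine ⟨fun i => 2^n * z i, ?_⟩
          rw [hz]
          congr 1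
          have hv : (fun i => ((2^n * z i : ℤ) : ℝ)) = (2:ℝ)^n • (fun i => (z i : ℝ)) := by
            funext i
            show ((2^n * z i : ℤ) : ℝ) = (2:ℝ)^n * (z i : ℝ)
            push_cast
            ring
          have hone : (2:ℝ)^n * (1/2)^n = 1 := by
            rw [← mul_pow]
            norm_num
          rw [hv, Matrix.mulVec_smul, Matrix.smul_mulVec, smul_smul, hone, one_smul]
      obtain ⟨n, hn⟩ := exists_pow_lt_of_lt_one (div_pos hcpos h₀pos)
        (by norm_num : (1/2 : ℝ) < 1)
      have hlt : ((1/2 : ℝ)^n) * h₀ < c := by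
        rw [← lt_div_iff₀ h₀pos]
        exact hn
      have hle1 : ((1/2 : ℝ)^n)^d ≤ (1/2 : ℝ)^n := by
        calc ((1/2 : ℝ)^n)^d ≤ ((1/2 : ℝ)^n)^1 :=
            pow_le_pow_of_le_one (by positivity) (by apply pow_le_one₀ <;> norm_num) hd
          _ = (1/2 : ℝ)^n := pow_one _
      have h1 := hc (hscale n)
      have h2 : c ≤ ((1/2 : ℝ)^n) * h₀ :=
        h1.trans (mul_le_mul_of_nonneg_right hle1 h₀pos.le)
      linarith
end

section
/- Suppose d ≥ 1, the increments X are i.i.d. with E[‖X‖²] < ∞ and mean zero, and almost surely ‖S_n‖ ≤ n^{1/2+ε} for all but finitely many n (for every ε > 0). Then for a_n = ⌈n^β⌉ with β > 1 and any ε > 0, almost surely for all but finitely many n, max_{a_n ≤ m ≤ a_{n+1}} ‖G_m − G_{a_n}‖ ≤ n^{β/2 − 1 + ε}. -/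
/-! Since `G (k+1) - G k = (S (k+1) - G k) / (k+1)` and `‖G k‖ ≤ max_{i ≤ k} ‖S i‖`, the growth
bound `‖S i‖ ≤ i^(1/2+δ)` makes every increment of `G` at most `2 (k+1)^(δ-1/2)`. Between
`a n ≥ n^β` and `a (n+1)` there are `O(n^(β-1))` steps, so the deviation is
`O(n^(β-1) · n^(β(δ-1/2))) = O(n^(β/2-1+βδ))`, and it remains to take `βδ < ε`. -/

open MeasureTheory ProbabilityTheory Filter Finset

lemma Real.rpow_add_one_sub_rpow_le {β x : ℝ} (hβ : 1 ≤ β) (hx : 0 ≤ x) :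
    (x + 1) ^ β - x ^ β ≤ β * (x + 1) ^ (β - 1) := by
  have h := (convexOn_rpow hβ).slope_le_of_hasDerivAt (x := x) (y := x + 1) hx
    (by simp only [Set.mem_Ici]; linarith) (by linarith)
    (Real.hasDerivAt_rpow_const (Or.inr hβ))
  simpa [slope_def_field] using h

lemma Nat.ceil_rpow_add_one_sub_ceil_rpow_le {β x : ℝ} (hβ : 1 ≤ β) (hx : 1 ≤ x) :
    (⌈(x + 1) ^ β⌉₊ : ℝ) - ⌈x ^ β⌉₊ ≤ (β * 2 ^ (β - 1) + 1) * x ^ (β - 1) := by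
  have hceil_le : (⌈(x + 1) ^ β⌉₊ : ℝ) ≤ (x + 1) ^ β + 1 :=
    (Nat.ceil_lt_add_one (by positivity)).le
  have hle_ceil : x ^ β ≤ ⌈x ^ β⌉₊ := Nat.le_ceil _
  have hsucc : (x + 1) ^ (β - 1) ≤ 2 ^ (β - 1) * x ^ (β - 1) := by
    rw [← Real.mul_rpow zero_le_two (by linarith)]
    exact Real.rpow_le_rpow (by linarith) (by linarith) (by linarith)
  have hone : 1 ≤ x ^ (β - 1) := Real.one_le_rpow hx (by linarith)
  linarith [Real.rpow_add_one_sub_rpow_le hβ (by linarith : 0 ≤ x),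
    mul_le_mul_of_nonneg_left hsucc (by linarith : (0 : ℝ) ≤ β)]

lemma eventually_const_mul_rpow_le (c : ℝ) {r q : ℝ} (hrq : r < q) :
    ∀ᶠ n : ℕ in atTop, c * (n : ℝ) ^ r ≤ (n : ℝ) ^ q := by
  have htop : Tendsto (fun n : ℕ => (n : ℝ) ^ (q - r)) atTop atTop :=
    (tendsto_rpow_atTop (sub_pos.2 hrq)).comp tendsto_natCast_atTop_atTop
  filter_upwards [htop.eventually_ge_atTop c, eventually_gt_atTop 0] with n hc hn
  have hn' : (0 : ℝ) < n := Nat.cast_pos.2 hn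
  calc c * (n : ℝ) ^ r ≤ (n : ℝ) ^ (q - r) * (n : ℝ) ^ r := by gcongr
    _ = (n : ℝ) ^ q := by rw [← Real.rpow_add hn', sub_add_cancel]

lemma eventually_forall_le_of_eventually_le {α : Type*} [Preorder α] {f g : ℕ → α}
    (hg : Monotone g) (hg_top : Tendsto g atTop atTop) (hfg : ∀ᶠ n in atTop, f n ≤ g n) :
    ∀ᶠ k in atTop, ∀ i ≤ k, f i ≤ g k := by
  obtain ⟨N, hN⟩ := eventually_atTop.1 hfg
  have hsmall : ∀ᶠ k in atTop, ∀ i ∈ range N, f i ≤ g k :=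
    (eventually_all_finset _).2 fun i _ => hg_top.eventually_ge_atTop (f i)
  filter_upwards [hsmall] with k hk i hik
  by_cases hiN : i < N
  · exact hk i (mem_range.2 hiN)
  · exact (hN i (not_lt.1 hiN)).trans (hg hik)

section CentreOfMass

variable {E : Type*} [NormedAddCommGroup E] [NormedSpace ℝ E]

noncomputable def centreOfMass (s : ℕ → E) (n : ℕ) : E :=
  (n : ℝ)⁻¹ • ∑ i ∈ Icc 1 n, s i

variable {s : ℕ → E}

lemma natCast_smul_centreOfMass (s : ℕ → E) (n : ℕ) :
    (n : ℝ) • centreOfMass s n = ∑ i ∈ Icc 1 n, s i := by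
  rcases n.eq_zero_or_pos with rfl | hn
  · simp
  · rw [centreOfMass, smul_inv_smul₀ (Nat.cast_ne_zero.2 hn.ne')]

lemma centreOfMass_succ_sub (s : ℕ → E) (n : ℕ) :
    centreOfMass s (n + 1) - centreOfMass s n
      = ((n : ℝ) + 1)⁻¹ • (s (n + 1) - centreOfMass s n) := by
  have hn : (n : ℝ) + 1 ≠ 0 := by positivity
  rw [centreOfMass, sum_Icc_succ_top (by omega), ← natCast_smul_centreOfMass, Nat.cast_succ]
  match_scalars <;> field_simp
  ring

lemma norm_centreOfMass_le {n : ℕ} {B : ℝ} (hB : ∀ i ≤ n, ‖s i‖ ≤ B) :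
    ‖centreOfMass s n‖ ≤ B := by
  rcases n.eq_zero_or_pos with rfl | hn
  · simpa [centreOfMass] using (norm_nonneg _).trans (hB 0 le_rfl)
  have hn' : (0 : ℝ) < n := Nat.cast_pos.2 hn
  have hsum : ‖∑ i ∈ Icc 1 n, s i‖ ≤ n * B := by
    simpa using norm_sum_le_of_le (Icc 1 n) fun i hi => hB i (mem_Icc.1 hi).2
  rw [centreOfMass, norm_smul, norm_inv, Real.norm_natCast, inv_mul_le_iff₀ hn']
  exact hsum

lemma norm_centreOfMass_succ_sub_le {n : ℕ} {B : ℝ} (hB : ∀ i ≤ n + 1, ‖s i‖ ≤ B) :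
    ‖centreOfMass s (n + 1) - centreOfMass s n‖ ≤ 2 * B / ((n : ℝ) + 1) := by
  have hG : ‖centreOfMass s n‖ ≤ B := norm_centreOfMass_le fun i hi => hB i (by omega)
  rw [centreOfMass_succ_sub, norm_smul, norm_inv, Real.norm_of_nonneg (by positivity),
    inv_mul_le_iff₀ (by positivity), mul_div_cancel₀ _ (by positivity)]
  calc ‖s (n + 1) - centreOfMass s n‖ ≤ ‖s (n + 1)‖ + ‖centreOfMass s n‖ := norm_sub_le _ _
    _ ≤ 2 * B := by linarith [hB (n + 1) le_rfl]

lemma eventually_norm_centreOfMass_succ_sub_le {p : ℝ} (hp : 0 < p)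
    (hs : ∀ᶠ n in atTop, ‖s n‖ ≤ (n : ℝ) ^ p) :
    ∀ᶠ k in atTop, ‖centreOfMass s (k + 1) - centreOfMass s k‖ ≤ 2 * ((k : ℝ) + 1) ^ (p - 1) := by
  have hmono : Monotone fun n : ℕ => (n : ℝ) ^ p := fun m n hmn =>
    Real.rpow_le_rpow (Nat.cast_nonneg m) (Nat.cast_le.2 hmn) hp.le
  have htop : Tendsto (fun n : ℕ => (n : ℝ) ^ p) atTop atTop :=
    (tendsto_rpow_atTop hp).comp tendsto_natCast_atTop_atTop
  filter_upwards [(tendsto_add_atTop_nat 1).eventually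
    (eventually_forall_le_of_eventually_le hmono htop hs)] with k hk
  have hk1 : (0 : ℝ) < k + 1 := by positivity
  calc ‖centreOfMass s (k + 1) - centreOfMass s k‖ ≤ 2 * ((k : ℝ) + 1) ^ p / ((k : ℝ) + 1) :=
        norm_centreOfMass_succ_sub_le (by exact_mod_cast hk)
    _ = 2 * ((k : ℝ) + 1) ^ (p - 1) := by rw [Real.rpow_sub_one hk1.ne', mul_div_assoc]

lemma eventually_norm_centreOfMass_sub_le {p : ℝ} (hp : 0 < p) (hp1 : p ≤ 1)
    (hs : ∀ᶠ n in atTop, ‖s n‖ ≤ (n : ℝ) ^ p) :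
    ∀ᶠ a in atTop, ∀ m, a ≤ m →
      ‖centreOfMass s m - centreOfMass s a‖ ≤ 2 * ((m : ℝ) - a) * ((a : ℝ) + 1) ^ (p - 1) := by
  obtain ⟨K, hK⟩ := eventually_atTop.1 (eventually_norm_centreOfMass_succ_sub_le hp hs)
  filter_upwards [eventually_ge_atTop K] with a hKa m ham
  have hstep : ∀ k, a ≤ k → k < m →
      dist (centreOfMass s k) (centreOfMass s (k + 1)) ≤ 2 * ((a : ℝ) + 1) ^ (p - 1) := by
    intro k hak _
    rw [dist_comm, dist_eq_norm]
    refine (hK k (hKa.trans hak)).trans ?_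
    gcongr 2 * ?_
    exact Real.rpow_le_rpow_of_nonpos (by positivity) (by exact_mod_cast Nat.succ_le_succ hak)
      (by linarith)
  rw [← dist_eq_norm, dist_comm]
  calc dist (centreOfMass s a) (centreOfMass s m) ≤ ∑ _k ∈ Ico a m, 2 * ((a : ℝ) + 1) ^ (p - 1) :=
        dist_le_Ico_sum_of_dist_le ham fun hak hkm => hstep _ hak hkm
    _ = 2 * ((m : ℝ) - a) * ((a : ℝ) + 1) ^ (p - 1) := by
        rw [sum_const, Nat.card_Ico, nsmul_eq_mul, Nat.cast_sub ham]
        ring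

theorem eventually_norm_centreOfMass_sub_le_rpow {p q β : ℝ} (hp : 0 < p) (hp1 : p ≤ 1)
    (hβ : 1 < β) (hq : β * p - 1 < q) (hs : ∀ᶠ n in atTop, ‖s n‖ ≤ (n : ℝ) ^ p)
    (a : ℕ → ℕ) (ha : ∀ n, a n = ⌈(n : ℝ) ^ β⌉₊) :
    ∀ᶠ n : ℕ in atTop, ∀ m, a n ≤ m → m ≤ a (n + 1) →
      ‖centreOfMass s m - centreOfMass s (a n)‖ ≤ (n : ℝ) ^ q := by
  have ha_top : Tendsto a atTop atTop := by
    simp only [funext ha]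
    exact tendsto_nat_ceil_atTop.comp
      ((tendsto_rpow_atTop (by linarith)).comp tendsto_natCast_atTop_atTop)
  set C := β * 2 ^ (β - 1) + 1
  filter_upwards [ha_top.eventually (eventually_norm_centreOfMass_sub_le hp hp1 hs),
    eventually_ge_atTop 1, eventually_const_mul_rpow_le (2 * C) hq] with n hn hn1 hnq m ham hma
  have hn1' : (1 : ℝ) ≤ n := Nat.one_le_cast.2 hn1
  have hn0 : (0 : ℝ) < n := by linarith
  have hgap : (m : ℝ) - a n ≤ C * (n : ℝ) ^ (β - 1) := by
    have hma' : (m : ℝ) ≤ a (n + 1) := Nat.cast_le.2 hma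
    rw [ha (n + 1), Nat.cast_succ] at hma'
    rw [ha n]
    linarith [Nat.ceil_rpow_add_one_sub_ceil_rpow_le hβ.le hn1']
  have han : ((a n : ℝ) + 1) ^ (p - 1) ≤ ((n : ℝ) ^ β) ^ (p - 1) := by
    refine Real.rpow_le_rpow_of_nonpos (by positivity) ?_ (by linarith)
    rw [ha]
    linarith [Nat.le_ceil ((n : ℝ) ^ β)]
  calc ‖centreOfMass s m - centreOfMass s (a n)‖
      ≤ 2 * ((m : ℝ) - a n) * ((a n : ℝ) + 1) ^ (p - 1) := hn m ham
    _ ≤ 2 * (C * (n : ℝ) ^ (β - 1)) * ((n : ℝ) ^ β) ^ (p - 1) := by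
        gcongr
    _ = 2 * C * (n : ℝ) ^ (β * p - 1) := by
        rw [← Real.rpow_mul hn0.le, mul_assoc, mul_assoc, ← Real.rpow_add hn0]
        ring_nf
    _ ≤ (n : ℝ) ^ q := hnq

end CentreOfMass

theorem centre_of_mass_subsequence_deviation_general {Ω : Type*} [MeasureSpace Ω] {d : ℕ}
    (S G : ℕ → Ω → EuclideanSpace ℝ (Fin d))
    (hG : ∀ n ω, G n ω = ((n : ℝ))⁻¹ • ∑ i ∈ Finset.Icc 1 n, S i ω)
    (hgrowth : ∀ ε > (0 : ℝ), ∀ᵐ ω ∂ℙ, ∀ᶠ n : ℕ in atTop,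
      ‖S n ω‖ ≤ (n : ℝ) ^ ((1 : ℝ) / 2 + ε))
    (β : ℝ) (hβ : 1 < β)
    (a : ℕ → ℕ) (ha : ∀ n, a n = ⌈(n : ℝ) ^ β⌉₊) :
    ∀ ε > (0 : ℝ), ∀ᵐ ω ∂ℙ, ∀ᶠ n : ℕ in atTop,
      ∀ m : ℕ, a n ≤ m → m ≤ a (n + 1) →
        ‖G m ω - G (a n) ω‖ ≤ (n : ℝ) ^ (β / 2 - 1 + ε) := by
  intro ε hε
  have hβ0 : 0 < β := by linarith
  obtain ⟨δ, hδ, hδ_half, hβδ⟩ : ∃ δ > 0, δ ≤ 1 / 2 ∧ β * δ < ε := by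
    refine ⟨min (ε / (2 * β)) (1 / 2), lt_min (by positivity) one_half_pos, min_le_right _ _, ?_⟩
    calc β * min (ε / (2 * β)) (1 / 2) ≤ β * (ε / (2 * β)) := by gcongr; exact min_le_left _ _
      _ < ε := by field_simp; linarith
  filter_upwards [hgrowth δ hδ] with ω hω
  simpa only [hG, centreOfMass] using eventually_norm_centreOfMass_sub_le_rpow
    (q := β / 2 - 1 + ε) (by positivity) (by linarith) hβ (by linarith) hω a ha

/-- Deviation estimate along the subsequence `a n = ⌈n^β⌉`, `β > 1`: for any `ε > 0`, almost
surely for all but finitely many `n`,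
`max_{a n ≤ m ≤ a (n+1)} ‖G m − G (a n)‖ ≤ n^{β/2 − 1 + ε}`. -/
theorem centre_of_mass_subsequence_deviation {Ω : Type*} [MeasureSpace Ω]
    [IsProbabilityMeasure (ℙ : Measure Ω)] {d : ℕ} (hd : 1 ≤ d)
    (X : ℕ → Ω → EuclideanSpace ℝ (Fin d))
    (hmeas : ∀ i, Measurable (X i))
    (hindep : iIndepFun X ℙ)
    (hident : ∀ i, IdentDistrib (X i) (X 1) ℙ ℙ)
    (hL2 : MemLp (X 1) 2 ℙ)
    (hmean : (∫ ω, X 1 ω ∂ℙ) = 0)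
    (S G : ℕ → Ω → EuclideanSpace ℝ (Fin d))
    (hS : ∀ n ω, S n ω = ∑ i ∈ Finset.Icc 1 n, X i ω)
    (hG : ∀ n ω, G n ω = ((n : ℝ))⁻¹ • ∑ i ∈ Finset.Icc 1 n, S i ω)
    (hgrowth : ∀ ε > (0 : ℝ), ∀ᵐ ω ∂ℙ, ∀ᶠ n : ℕ in atTop,
      ‖S n ω‖ ≤ (n : ℝ) ^ ((1 : ℝ) / 2 + ε))
    (β : ℝ) (hβ : 1 < β)
    (a : ℕ → ℕ) (ha : ∀ n, a n = ⌈(n : ℝ) ^ β⌉₊) :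
    ∀ ε > (0 : ℝ), ∀ᵐ ω ∂ℙ, ∀ᶠ n : ℕ in atTop,
      ∀ m : ℕ, a n ≤ m → m ≤ a (n + 1) →
        ‖G m ω - G (a n) ω‖ ≤ (n : ℝ) ^ (β / 2 - 1 + ε) :=
  centre_of_mass_subsequence_deviation_general S G hG hgrowth β hβ a ha
end
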